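/- For every nonnegative integer n, ∑_{k=0}^{n} k²·H_k² = (n(n+1)(2n+1)/6)·H_{n+1}² − (1/18)(4n³+9n²+5n+3)·H_{n+1} + (1/108)(n+1)(8n²+n+18). -/

import Mathlib

open Finset

/-- The harmonic number `H n = ∑_{k=1}^n 1/k`. -/
def H (n : ℕ) : ℚ := ∑ k ∈ Finset.range n, (1 : ℚ) / ((k : ℚ) + 1)

/-- The generalized harmonic number `H n ^ (m) = ∑_{k=1}^n 1/k^m`. -/
def Hgen (m n : ℕ) : ℚ := ∑ k ∈ Finset.range n, (1 : ℚ) / ((k : ℚ) + 1) ^ m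

theorem H_succ (n : ℕ) : H (n + 1) = H n + 1 / ((n : ℚ) + 1) := by
  simp only [H, sum_range_succ]

theorem stmt10 (n : ℕ) :
    ∑ k ∈ Finset.range (n + 1), (k : ℚ) ^ 2 * (H k) ^ 2 =
      ((n : ℚ) * ((n : ℚ) + 1) * (2 * (n : ℚ) + 1) / 6) * (H (n + 1)) ^ 2
        - (1 / 18) * (4 * (n : ℚ) ^ 3 + 9 * (n : ℚ) ^ 2 + 5 * (n : ℚ) + 3) * H (n + 1)
        + (1 / 108) * ((n : ℚ) + 1) * (8 * (n : ℚ) ^ 2 + (n : ℚ) + 18) := by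
  induction n with
  | zero => norm_num [H]
  | succ n ih =>
    rw [sum_range_succ, ih, H_succ (n + 1)]
    push_cast
    field_simp
    ring
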